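/- Let R be a Dedekind domain of characteristic 0 which is not a field, with fraction field K, and let Δ be a nonzero polynomial in two variables s, t with coefficients in R. For a nonzero prime ideal 𝔭 of R and an element s₀ of the localization R_(𝔭) of R at 𝔭, call the pair (s₀, 𝔭) bad if, for the one-variable polynomial Δ(s₀, t) with coefficients in R_(𝔭), either its reduction modulo the maximal ideal of R_(𝔭) is the zero polynomial of (R/𝔭)[t], or the number of distinct roots of this reduction in an algebraic closure of R/𝔭 is strictly smaller than the number of distinct roots of Δ(s₀, t) in an algebraic closure of K. Then there exist a finite set S of nonzero prime ideals of R and a natural number d such that for every nonzero prime ideal 𝔭 of R not in S, the set of residues in R/𝔭 of those s₀ ∈ R_(𝔭) for which (s₀, 𝔭) is bad has cardinality at most d. -/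

import Mathlib

open Polynomial IsDedekindDomain

set_option synthInstance.maxHeartbeats 400000
set_option maxHeartbeats 1000000

/-- The number of distinct roots of a one-variable polynomial over a field `F`, counted in
an algebraic closure of `F`. -/
noncomputable def numDistinctRoots (F : Type) [Field F] (q : F[X]) : ℕ :=
  letI : DecidableEq (AlgebraicClosure F) := Classical.decEq _
  (q.map (algebraMap F (AlgebraicClosure F))).roots.toFinset.card

/-- The canonical ring homomorphism from the localization `R_(𝔭)` of a domain `R` at a prime
`𝔭` to the fraction field of `R`. -/
noncomputable def locToFrac (R : Type) [CommRing R] [IsDomain R] (p : Ideal R)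
    [p.IsPrime] : Localization.AtPrime p →+* FractionRing R :=
  IsLocalization.map (FractionRing R) (RingHom.id R)
    (fun (x : R) (hx : x ∈ p.primeCompl) => by
      have hx' : x ∉ p := hx
      simp only [Submonoid.mem_comap, RingHom.id_apply]
      exact mem_nonZeroDivisors_of_ne_zero (by rintro rfl; exact hx' p.zero_mem))

/-- The pair `(s₀, 𝔭)` is bad for the two-variable polynomial `Δ ∈ R[s][t]` (with inner
variable `s` and outer variable `t`): the reduction of `Δ(s₀, t)` modulo the maximal ideal
of `R_(𝔭)` is either the zero polynomial over the residue field, or has strictly fewer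
distinct roots (in an algebraic closure of the residue field) than `Δ(s₀, t)` has in an
algebraic closure of the fraction field of `R`. -/
noncomputable def BadPair (R : Type) [CommRing R] [IsDomain R]
    (Δ : Polynomial (Polynomial R)) (p : Ideal R) [p.IsPrime]
    (s₀ : Localization.AtPrime p) : Prop :=
  let q : Polynomial (Localization.AtPrime p) :=
    Δ.map (Polynomial.eval₂RingHom (algebraMap R (Localization.AtPrime p)) s₀)
  q.map (IsLocalRing.residue (Localization.AtPrime p)) = 0 ∨
    numDistinctRoots (IsLocalRing.ResidueField (Localization.AtPrime p))
        (q.map (IsLocalRing.residue (Localization.AtPrime p))) <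
      numDistinctRoots (FractionRing R) (q.map (locToFrac R p))

/-!
Over the fraction field of `R[s]`, the radical `g` of `Δ` is separable, divides `Δ`, and `Δ`
divides a power of `g`. Clearing denominators gives `G ∈ R[s][t]` and nonzero `c, c₂, e ∈ R[s]`
with `G ∣ c Δ`, `Δ ∣ c₂ G ^ N` and `e ∈ (G, ∂G/∂t)`. If `s₀` does not reduce to a root of
`E = c c₂ e · lc G · lc Δ` modulo `𝔭`, then `Δ(s₀, t)` has at most `deg G` distinct roots over
`K`, while its reduction is nonzero and divisible by the separable reduction of `G`, so it has
at least `deg G` of them. Hence bad residues are roots of `E mod 𝔭`, a nonzero polynomial of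
degree at most `deg E` as soon as `𝔭` does not contain the leading coefficient of `E`, which
excludes only finitely many primes.
-/

namespace Polynomial

theorem map_ne_zero_of_leadingCoeff_ne_zero {A B : Type*} [Semiring A] [Semiring B] {f : A →+* B}
    {p : A[X]} (h : f p.leadingCoeff ≠ 0) : p.map f ≠ 0 := fun h0 =>
  h (by rw [← leadingCoeff_map_of_leadingCoeff_ne_zero f h, h0, leadingCoeff_zero])

section Field

variable {F : Type*} [Field F]

theorem exists_separable_dvd_dvd_pow [CharZero F] {f : F[X]} (hf : f ≠ 0) :
    ∃ g : F[X], g.Separable ∧ g ∣ f ∧ ∃ N : ℕ, f ∣ g ^ N := by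
  classical
  exact ⟨UniqueFactorizationMonoid.radical f,
    PerfectField.separable_iff_squarefree.mpr UniqueFactorizationMonoid.squarefree_radical,
    UniqueFactorizationMonoid.radical_dvd_self,
    UniqueFactorizationMonoid.exists_dvd_radical_self_pow hf⟩

theorem card_roots_toFinset_le_natDegree_of_dvd_C_mul_pow [DecidableEq F] {f g : F[X]} {a : F}
    {N : ℕ} (hg : g ≠ 0) (ha : a ≠ 0) (h : f ∣ C a * g ^ N) :
    f.roots.toFinset.card ≤ g.natDegree := by
  calc f.roots.toFinset.card ≤ g.roots.toFinset.card := Finset.card_le_card fun x hx => ?_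
    _ ≤ g.roots.card := Multiset.toFinset_card_le _
    _ ≤ g.natDegree := card_roots' g
  rw [Multiset.mem_toFinset, mem_roots'] at hx
  have hx' : a * g.eval x ^ N = 0 := by simpa using hx.2.dvd h
  rw [Multiset.mem_toFinset, mem_roots hg]
  exact eq_zero_of_pow_eq_zero ((mul_eq_zero.mp hx').resolve_left ha)

theorem natDegree_le_card_roots_toFinset_of_dvd_C_mul [IsAlgClosed F] [DecidableEq F]
    {f g : F[X]} {a : F} (hg : g.Separable) (hf : f ≠ 0) (ha : a ≠ 0) (h : g ∣ C a * f) :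
    g.natDegree ≤ f.roots.toFinset.card := by
  rw [← IsAlgClosed.card_roots_eq_natDegree, ← Multiset.toFinset_card_of_nodup (nodup_roots hg)]
  refine Finset.card_le_card fun x hx => ?_
  rw [Multiset.mem_toFinset] at hx ⊢
  exact Multiset.mem_of_le (roots.le_of_dvd hf ((isUnit_C.mpr ha.isUnit).dvd_mul_left.mp h)) hx

end Field

end Polynomial

section Specialization

variable {A : Type*} [CommRing A] {F : Type} [Field F] (φ : A →+* F)

theorem numDistinctRoots_map [DecidableEq (AlgebraicClosure F)] (Δ : A[X]) :
    numDistinctRoots F (Δ.map φ) =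
      (Δ.map ((algebraMap F (AlgebraicClosure F)).comp φ)).roots.toFinset.card := by
  rw [numDistinctRoots, map_map]
  congr
  exact Subsingleton.elim _ _

theorem Polynomial.separable_map_of_mul_add_mul_eq_C {G U V : A[X]} {e : A}
    (h : U * G + V * derivative G = C e) (he : φ e ≠ 0) : (G.map φ).Separable := by
  have h' : U.map φ * G.map φ + V.map φ * derivative (G.map φ) = C (φ e) := by
    simpa [derivative_map] using congrArg (map φ) h
  refine ⟨C (φ e)⁻¹ * U.map φ, C (φ e)⁻¹ * V.map φ, ?_⟩
  rw [mul_assoc, mul_assoc, ← mul_add, h', ← C_mul, inv_mul_cancel₀ he, C_1]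

theorem numDistinctRoots_map_le_natDegree {Δ G : A[X]} {c : A} {N : ℕ}
    (h : Δ ∣ C c * G ^ N) (hc : φ c ≠ 0) (hG : G.map φ ≠ 0) :
    numDistinctRoots F (Δ.map φ) ≤ G.natDegree := by
  classical
  set ψ := (algebraMap F (AlgebraicClosure F)).comp φ
  have hψ : ∀ a, φ a ≠ 0 → ψ a ≠ 0 := fun a ha => by simpa [ψ] using ha
  rw [numDistinctRoots_map]
  refine (card_roots_toFinset_le_natDegree_of_dvd_C_mul_pow (g := G.map ψ) (N := N) ?_
    (hψ c hc) ?_).trans natDegree_map_le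
  · rw [← map_map]
    exact (Polynomial.map_ne_zero_iff (algebraMap F _).injective).mpr hG
  · simpa using Polynomial.map_dvd ψ h

theorem natDegree_le_numDistinctRoots_map {Δ G U V : A[X]} {c e : A} (h : G ∣ C c * Δ)
    (hsep : U * G + V * derivative G = C e) (hc : φ c ≠ 0) (he : φ e ≠ 0)
    (hG : φ G.leadingCoeff ≠ 0) (hΔ : Δ.map φ ≠ 0) :
    G.natDegree ≤ numDistinctRoots F (Δ.map φ) := by
  classical
  set ψ := (algebraMap F (AlgebraicClosure F)).comp φ
  have hψ : ∀ a, φ a ≠ 0 → ψ a ≠ 0 := fun a ha => by simpa [ψ] using ha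
  rw [numDistinctRoots_map, ← natDegree_map_of_leadingCoeff_ne_zero ψ (hψ _ hG)]
  refine natDegree_le_card_roots_toFinset_of_dvd_C_mul
    (separable_map_of_mul_add_mul_eq_C ψ hsep (hψ e he)) ?_ (hψ c hc)
    (by simpa using Polynomial.map_dvd ψ h)
  rw [← map_map]
  exact (Polynomial.map_ne_zero_iff (algebraMap F _).injective).mpr hΔ

end Specialization

section ClearDenominators

variable {A : Type*} [CommRing A] [IsDomain A]

local notation "ι" => algebraMap A (FractionRing A)

theorem exists_map_eq_C_mul (q : (FractionRing A)[X]) :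
    ∃ (Q : A[X]) (b : A), b ≠ 0 ∧ Q.map ι = C (ι b) * q := by
  obtain ⟨b, hb, hq⟩ := IsLocalization.integerNormalization_spec (nonZeroDivisors A) q
  exact ⟨_, b, nonZeroDivisors.ne_zero hb,
    by rw [hq, Algebra.smul_def, Polynomial.algebraMap_apply]⟩

theorem exists_dvd_C_mul_of_map_dvd {f g : A[X]} (h : f.map ι ∣ g.map ι) :
    ∃ c : A, c ≠ 0 ∧ f ∣ C c * g := by
  obtain ⟨q, hq⟩ := h
  obtain ⟨Q, b, hb, hQ⟩ := exists_map_eq_C_mul q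
  refine ⟨b, hb, Q, map_injective ι (IsFractionRing.injective A _) ?_⟩
  simp only [Polynomial.map_mul, map_C, hQ, hq]
  ring

theorem exists_mul_add_mul_eq_C_of_isCoprime_map {f g : A[X]}
    (h : IsCoprime (f.map ι) (g.map ι)) :
    ∃ (U V : A[X]) (e : A), e ≠ 0 ∧ U * f + V * g = C e := by
  obtain ⟨u, v, huv⟩ := h
  obtain ⟨U, bu, hbu, hU⟩ := exists_map_eq_C_mul u
  obtain ⟨V, bv, hbv, hV⟩ := exists_map_eq_C_mul v
  refine ⟨C bv * U, C bu * V, bu * bv, mul_ne_zero hbu hbv,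
    map_injective ι (IsFractionRing.injective A _) ?_⟩
  simp only [Polynomial.map_add, Polynomial.map_mul, map_C, hU, hV, map_mul]
  linear_combination C (ι bu) * C (ι bv) * huv

theorem exists_integral_separable_dvd [CharZero A] {Δ : A[X]} (hΔ : Δ ≠ 0) :
    ∃ (G U V : A[X]) (c c₂ e : A) (N : ℕ), G ≠ 0 ∧ c ≠ 0 ∧ c₂ ≠ 0 ∧ e ≠ 0 ∧
      G ∣ C c * Δ ∧ Δ ∣ C c₂ * G ^ N ∧ U * G + V * derivative G = C e := by
  have hinj := IsFractionRing.injective A (FractionRing A)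
  obtain ⟨g, hsep, hgΔ, N, hΔg⟩ :=
    exists_separable_dvd_dvd_pow ((Polynomial.map_ne_zero_iff hinj).mpr hΔ)
  obtain ⟨G, b, hb, hG⟩ := exists_map_eq_C_mul g
  have hGg : Associated g (G.map ι) :=
    hG ▸ (associated_unit_mul_left g _ (isUnit_C.mpr (isUnit_iff_ne_zero.mpr
      ((map_ne_zero_iff _ hinj).mpr hb)))).symm
  obtain ⟨c, hc, hGΔ⟩ := exists_dvd_C_mul_of_map_dvd (hGg.dvd_iff_dvd_left.mp hgΔ)
  obtain ⟨c₂, hc₂, hΔG⟩ := exists_dvd_C_mul_of_map_dvd (g := G ^ N)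
    (by simpa using (hGg.pow_pow (n := N)).dvd_iff_dvd_right.mp hΔg)
  have hsepG := hGg.separable hsep
  rw [separable_def, derivative_map] at hsepG
  obtain ⟨U, V, e, he, hUV⟩ := exists_mul_add_mul_eq_C_of_isCoprime_map hsepG
  have hG0 : G ≠ 0 := fun h => hsep.ne_zero (hGg.eq_zero_iff.mpr (by simp [h]))
  exact ⟨G, U, V, c, c₂, e, N, hG0, hc, hc₂, he, hGΔ, hΔG, hUV⟩

end ClearDenominators

section BadPair

variable {R : Type} [CommRing R] (p : Ideal R) [p.IsPrime]

local notation "Rₚ" => Localization.AtPrime p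

theorem residue_eval₂_eq_aeval (s₀ : Rₚ) (a : R[X]) :
    IsLocalRing.residue Rₚ (a.eval₂ (algebraMap R Rₚ) s₀) =
      aeval (IsLocalRing.residue Rₚ s₀) a := by
  rw [hom_eval₂, aeval_def]
  rfl

theorem algebraMap_residueField_ne_zero {a : R} (ha : a ∉ p) :
    algebraMap R (IsLocalRing.ResidueField Rₚ) a ≠ 0 := by
  rw [IsScalarTower.algebraMap_apply R Rₚ, Ne, IsLocalRing.ResidueField.algebraMap_eq,
    IsLocalRing.residue_eq_zero_iff, IsLocalization.AtPrime.to_map_mem_maximal_iff Rₚ p]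
  exact ha

variable [IsDomain R]

theorem locToFrac_injective : Function.Injective (locToFrac R p) :=
  IsLocalization.map_injective_of_injective' p.primeCompl R (FractionRing R) _
    zero_notMem_nonZeroDivisors Function.injective_id

theorem aeval_residue_eq_zero_of_badPair {Δ G U V : R[X][X]} {c c₂ e : R[X]} {N : ℕ}
    (hGΔ : G ∣ C c * Δ) (hΔG : Δ ∣ C c₂ * G ^ N) (hUV : U * G + V * derivative G = C e)
    {s₀ : Rₚ} (hbad : BadPair R Δ p s₀) :
    aeval (IsLocalRing.residue Rₚ s₀) (c * c₂ * e * G.leadingCoeff * Δ.leadingCoeff) = 0 := by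
  by_contra h
  set φ := eval₂RingHom (algebraMap R Rₚ) s₀
  set ψ := (IsLocalRing.residue Rₚ).comp φ
  set χ := (locToFrac R p).comp φ
  have hχ : ∀ a, ψ a ≠ 0 → χ a ≠ 0 := fun a ha =>
    (map_ne_zero_iff _ (locToFrac_injective p)).mpr fun h0 => ha (by simp [ψ, h0])
  rw [← residue_eval₂_eq_aeval] at h
  change ψ _ ≠ 0 at h
  simp only [map_mul, mul_ne_zero_iff] at h
  obtain ⟨⟨⟨⟨hc, hc₂⟩, he⟩, hG⟩, hΔ⟩ := h
  have hΔψ : Δ.map ψ ≠ 0 := map_ne_zero_of_leadingCoeff_ne_zero hΔ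
  simp only [BadPair, map_map] at hbad
  refine hbad.elim hΔψ (not_lt.mpr ?_)
  calc numDistinctRoots (FractionRing R) (Δ.map χ)
      ≤ G.natDegree := numDistinctRoots_map_le_natDegree χ hΔG (hχ _ hc₂)
        (map_ne_zero_of_leadingCoeff_ne_zero (hχ _ hG))
    _ ≤ numDistinctRoots _ (Δ.map ψ) :=
        natDegree_le_numDistinctRoots_map ψ hGΔ hUV hc he hG hΔψ

end BadPair

theorem finitely_many_bad_residues_general (R : Type) [CommRing R] [IsDomain R]
    [IsDedekindDomain R] [CharZero R]
    (Δ : Polynomial (Polynomial R)) (hΔ : Δ ≠ 0) :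
    ∃ (S : Finset (HeightOneSpectrum R)) (d : ℕ),
      ∀ v : HeightOneSpectrum R, v ∉ S →
        letI : v.asIdeal.IsPrime := v.isPrime
        let B : Set (IsLocalRing.ResidueField (Localization.AtPrime v.asIdeal)) :=
          {ρ | ∃ s₀ : Localization.AtPrime v.asIdeal,
            IsLocalRing.residue (Localization.AtPrime v.asIdeal) s₀ = ρ ∧
            BadPair R Δ v.asIdeal s₀}
        B.Finite ∧ B.ncard ≤ d := by
  obtain ⟨G, U, V, c, c₂, e, N, hG, hc, hc₂, he, hGΔ, hΔG, hUV⟩ :=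
    exists_integral_separable_dvd hΔ
  set E := c * c₂ * e * G.leadingCoeff * Δ.leadingCoeff
  have hE : E.leadingCoeff ≠ 0 := by simp [E, hG, hc, hc₂, he, hΔ]
  have hS := Ideal.finite_factors (I := Ideal.span {E.leadingCoeff}) (by simpa using hE)
  refine ⟨hS.toFinset, E.natDegree, fun v hv => ?_⟩
  intro B
  have hv : E.leadingCoeff ∉ v.asIdeal := fun h =>
    hv (hS.mem_toFinset.mpr (Ideal.dvd_span_singleton.mpr h))
  have hB : B ⊆ E.rootSet (IsLocalRing.ResidueField (Localization.AtPrime v.asIdeal)) := by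
    rintro _ ⟨s₀, rfl, hbad⟩
    rw [mem_rootSet']
    exact ⟨map_ne_zero_of_leadingCoeff_ne_zero (algebraMap_residueField_ne_zero _ hv),
      aeval_residue_eq_zero_of_badPair _ hGΔ hΔG hUV hbad⟩
  exact ⟨(E.rootSet_finite _).subset hB,
    (Set.ncard_le_ncard hB (E.rootSet_finite _)).trans (E.ncard_rootSet_le _)⟩

/-- Lemma 3.7 (lem:goodprimes): for a nonzero two-variable polynomial `Δ ∈ R[s][t]` over a
Dedekind domain `R` of characteristic `0` which is not a field, there are a finite set `S`
of nonzero primes of `R` and a natural number `d` such that for every nonzero prime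
`𝔭 ∉ S`, the set of residues modulo `𝔭` of the elements `s₀ ∈ R_(𝔭)` with `(s₀, 𝔭)` bad
has at most `d` elements. -/
theorem finitely_many_bad_residues (R : Type) [CommRing R] [IsDomain R]
    [IsDedekindDomain R] [CharZero R] (hR : ¬ IsField R)
    (Δ : Polynomial (Polynomial R)) (hΔ : Δ ≠ 0) :
    ∃ (S : Finset (HeightOneSpectrum R)) (d : ℕ),
      ∀ v : HeightOneSpectrum R, v ∉ S →
        letI : v.asIdeal.IsPrime := v.isPrime
        let B : Set (IsLocalRing.ResidueField (Localization.AtPrime v.asIdeal)) :=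
          {ρ | ∃ s₀ : Localization.AtPrime v.asIdeal,
            IsLocalRing.residue (Localization.AtPrime v.asIdeal) s₀ = ρ ∧
            BadPair R Δ v.asIdeal s₀}
        B.Finite ∧ B.ncard ≤ d :=
  finitely_many_bad_residues_general R Δ hΔ
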